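/- Let A ∈ ℝ^{n×n}, B ∈ ℝ^{n×m}, H ∈ ℝ^{m×k}, C ∈ ℝ^{q×n}, and suppose B and H have full column rank (so BH is injective). Let x_df ∈ ℝⁿ be nonzero with Ker(C) = span(x_df), and suppose there exists w₀ ∈ ℝ^{k} with A x_df + B H w₀ = 0. Define the block matrices Ā = [[A, BH],[0,0]] ∈ ℝ^{(n+k)×(n+k)} and C̄ = [C, 0] ∈ ℝ^{q×(n+k)}. Then Ker([Ā; C̄]) = span((x_df, w₀)), i.e., the common kernel of Ā and C̄ is exactly the line spanned by the stacked vector (x_df, w₀). -/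
import Mathlib


open Matrix

/-- the common kernel of `Ā = [[A, BH],[0,0]]` and `C̄ = [C, 0]`
is exactly the line spanned by the stacked vector `(x_df, w₀)`. -/
theorem stmt9 (n m k q : ℕ)
    (A : Matrix (Fin n) (Fin n) ℝ) (B : Matrix (Fin n) (Fin m) ℝ)
    (H : Matrix (Fin m) (Fin k) ℝ) (C : Matrix (Fin q) (Fin n) ℝ)
    (hB : ∀ v : Fin m → ℝ, B.mulVec v = 0 → v = 0)
    (hH : ∀ v : Fin k → ℝ, H.mulVec v = 0 → v = 0)
    (x_df : Fin n → ℝ) (hx_df : x_df ≠ 0)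
    (hC : ∀ x : Fin n → ℝ, C.mulVec x = 0 ↔ ∃ c : ℝ, x = c • x_df)
    (w₀ : Fin k → ℝ) (hw₀ : A.mulVec x_df + (B * H).mulVec w₀ = 0) :
    ∀ (x : Fin n → ℝ) (w : Fin k → ℝ),
      (A.mulVec x + (B * H).mulVec w = 0 ∧ C.mulVec x = 0) ↔
        ∃ c : ℝ, x = c • x_df ∧ w = c • w₀ := by
  intro x w
  constructor
  · rintro ⟨h1, h2⟩
    obtain ⟨c, rfl⟩ := (hC x).mp h2
    refine ⟨c, rfl, ?_⟩
    have h1' : c • (A *ᵥ x_df) + (B * H) *ᵥ w = 0 := by rwa [mulVec_smul] at h1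
    have key : (B * H) *ᵥ (w - c • w₀) = 0 := by
      rw [mulVec_sub, mulVec_smul]
      have e1 : (B * H) *ᵥ w = -(c • (A *ᵥ x_df)) := eq_neg_of_add_eq_zero_right h1'
      have e2 : (B * H) *ᵥ w₀ = -(A *ᵥ x_df) := eq_neg_of_add_eq_zero_right hw₀
      rw [e1, e2]
      module
    rw [← mulVec_mulVec] at key
    have := hH _ (hB _ key)
    exact sub_eq_zero.mp this
  · rintro ⟨c, rfl, rfl⟩
    refine ⟨?_, (hC _).mpr ⟨c, rfl⟩⟩
    rw [mulVec_smul, mulVec_smul]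
    have e2 : (B * H) *ᵥ w₀ = -(A *ᵥ x_df) := eq_neg_of_add_eq_zero_right hw₀
    rw [e2]
    module
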